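/- arXiv:1804.07595 — 2 statements merged into one kernel-verified Lean document; each statement's English description precedes it below -/
import Mathlib

section
/- For any function f : E → F between normed spaces, any n ≥ 1, any x ∈ E and h ∈ E, the identity f(x + 2^n h) − f(x) − 2^n (f(x+h) − f(x)) = Σ_{k=0}^{n−1} 2^k · Δ²_{2^{n−k−1} h} f(x) holds, where Δ²_v f(x) = f(x+2v) − 2f(x+v) + f(x). -/
/-!
Writing `D v = f (x + v) - f x`, one has `Δ²_v f(x) = D (2 v) - 2 D v`. Hence the `k`-th summand
is `g k - g (k + 1)` with `g k = 2 ^ k • D (2 ^ (n - k) • h)`, and the sum telescopes to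
`g 0 - g n = D (2 ^ n • h) - 2 ^ n • D h`.
-/

/-- Second difference operator: Δ²_v f(x) = f(x+2v) − 2f(x+v) + f(x). -/
def secondDiff {E F : Type*} [AddCommGroup E] [AddCommGroup F] [Module ℝ F]
    (f : E → F) (v : E) (x : E) : F :=
  f (x + 2 • v) - (2 : ℝ) • f (x + v) + f x

section

variable {E F : Type*} [AddCommGroup E] [Module ℝ E] [AddCommGroup F] [Module ℝ F]

lemma secondDiff_eq_sub_two_smul (f : E → F) (v x : E) :
    secondDiff f v x = (f (x + (2 : ℝ) • v) - f x) - (2 : ℝ) • (f (x + v) - f x) := by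
  simp only [secondDiff, two_smul]
  abel

lemma pow_smul_secondDiff_pow_smul (f : E → F) (x h : E) (k m : ℕ) :
    (2 ^ k : ℝ) • secondDiff f ((2 ^ m : ℝ) • h) x =
      (2 ^ k : ℝ) • (f (x + (2 ^ (m + 1) : ℝ) • h) - f x)
        - (2 ^ (k + 1) : ℝ) • (f (x + (2 ^ m : ℝ) • h) - f x) := by
  rw [secondDiff_eq_sub_two_smul, smul_smul, ← pow_succ', smul_sub, smul_smul, ← pow_succ]

end

theorem stmt1_general {E F : Type*} [AddCommGroup E] [Module ℝ E] [AddCommGroup F] [Module ℝ F]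
    (f : E → F) (n : ℕ) (x h : E) :
    f (x + (2 ^ n : ℝ) • h) - f x - (2 ^ n : ℝ) • (f (x + h) - f x) =
      ∑ k ∈ Finset.range n, (2 ^ k : ℝ) • secondDiff f ((2 ^ (n - k - 1) : ℝ) • h) x := by
  set g : ℕ → F := fun k ↦ (2 ^ k : ℝ) • (f (x + (2 ^ (n - k) : ℝ) • h) - f x)
  have summand_eq : ∀ k ∈ Finset.range n,
      (2 ^ k : ℝ) • secondDiff f ((2 ^ (n - k - 1) : ℝ) • h) x = g k - g (k + 1) := by
    intro k hk
    have hnk : n - k - 1 + 1 = n - k := by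
      rw [Finset.mem_range] at hk
      omega
    rw [pow_smul_secondDiff_pow_smul, hnk, Nat.sub_sub]
  rw [Finset.sum_congr rfl summand_eq, Finset.sum_range_sub']
  simp only [g, pow_zero, one_smul, Nat.sub_zero, Nat.sub_self]

theorem stmt1 {E F : Type*} [AddCommGroup E] [Module ℝ E] [AddCommGroup F] [Module ℝ F]
    (f : E → F) (n : ℕ) (hn : 1 ≤ n) (x h : E) :
    f (x + (2 ^ n : ℝ) • h) - f x - (2 ^ n : ℝ) • (f (x + h) - f x) =
      ∑ k ∈ Finset.range n, (2 ^ k : ℝ) • secondDiff f ((2 ^ (n - k - 1) : ℝ) • h) x :=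
  stmt1_general f n x h
end

section
/- Let f : E → F be bounded with sup-norm ‖f‖_∞, let α ∈ (0,1), and suppose Z := sup_{t>0} η(f;t)/t^α < ∞, where η(f;t) = sup_{x, ‖h‖≤t} ‖f(x+2h)−2f(x+h)+f(x)‖. Then sup_{t>0} ω(f;t)/t^α ≤ (1/(1−2^{α−1})) · Z, where ω(f;t) = sup_{x, ‖h‖≤t} ‖f(x+h)−f(x)‖. -/
/-!
Since `2 • (f (x + h) - f x) = (f (x + 2 • h) - f x) - (f (x + 2 • h) - 2 • f (x + h) + f x)`,
the moduli satisfy the doubling inequality `ω(t) ≤ (ω(2t) + η(t)) / 2`. Iterating it `n` times,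
the term `ω(2ⁿt) / 2ⁿ ≤ 2M / 2ⁿ` vanishes, while the bounds `η(2ᵏt) / 2ᵏ⁺¹ ≤ Z tᵅ (2^(α-1))ᵏ / 2`
form a geometric series, giving `ω(t) ≤ Z tᵅ / (2 - 2ᵅ)`.
-/

open Set Finset Filter Topology

noncomputable def omegaMod {E F : Type*} [NormedAddCommGroup E] [NormedAddCommGroup F]
    (f : E → F) (t : ℝ) : ℝ :=
  sSup {r : ℝ | ∃ x h : E, ‖h‖ ≤ t ∧ r = ‖f (x + h) - f x‖}

noncomputable def etaMod {E F : Type*} [NormedAddCommGroup E] [NormedSpace ℝ E]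
    [NormedAddCommGroup F] [NormedSpace ℝ F] (f : E → F) (t : ℝ) : ℝ :=
  sSup {r : ℝ | ∃ x h : E, ‖h‖ ≤ t ∧ r = ‖f (x + 2 • h) - 2 • f (x + h) + f x‖}

theorem le_add_sum_of_doubling {g e : ℝ → ℝ} (hrec : ∀ t > 0, g t ≤ (g (2 * t) + e t) / 2)
    (n : ℕ) {t : ℝ} (ht : 0 < t) :
    g t ≤ g (2 ^ n * t) / 2 ^ n + ∑ k ∈ range n, e (2 ^ k * t) / 2 ^ (k + 1) := by
  induction n generalizing t with
  | zero => simp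
  | succ n ih =>
    have hpow : ∀ k : ℕ, (2 : ℝ) ^ (k + 1) * t = 2 ^ k * (2 * t) := fun k => by ring
    have hsum : ∑ k ∈ range (n + 1), e (2 ^ k * t) / 2 ^ (k + 1)
        = (∑ k ∈ range n, e (2 ^ k * (2 * t)) / 2 ^ (k + 1) + e t) / 2 := by
      rw [sum_range_succ', add_div, sum_div]
      simp [hpow, div_div, ← pow_succ]
    calc g t ≤ (g (2 * t) + e t) / 2 := hrec t ht
      _ ≤ (g (2 ^ n * (2 * t)) / 2 ^ n
            + ∑ k ∈ range n, e (2 ^ k * (2 * t)) / 2 ^ (k + 1) + e t) / 2 := by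
          gcongr; exact ih (by positivity)
      _ = g (2 ^ (n + 1) * t) / 2 ^ (n + 1)
            + ∑ k ∈ range (n + 1), e (2 ^ k * t) / 2 ^ (k + 1) := by
          rw [hsum, hpow, pow_succ]; ring

theorem le_mul_rpow_div_of_doubling {g e : ℝ → ℝ} {Z α : ℝ} (hα : α < 1)
    (hg : BddAbove (range g)) (hrec : ∀ t > 0, g t ≤ (g (2 * t) + e t) / 2)
    (he : ∀ t > 0, e t ≤ Z * t ^ α) {t : ℝ} (ht : 0 < t) :
    g t ≤ Z * t ^ α / (2 - 2 ^ α) := by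
  obtain ⟨C, hC⟩ := hg
  set r : ℝ := 2 ^ α / 2 with hr
  have hr0 : 0 ≤ r := by positivity
  have h2α : (2 : ℝ) ^ α < 2 := by simpa using Real.rpow_lt_self_of_one_lt one_lt_two hα
  have hr1 : r < 1 := by rwa [div_lt_one two_pos]
  have hterm : ∀ k : ℕ, e (2 ^ k * t) / 2 ^ (k + 1) ≤ Z * t ^ α / 2 * r ^ k := fun k => by
    have hk := he (2 ^ k * t) (by positivity)
    rw [Real.mul_rpow (by positivity) ht.le, ← Real.rpow_natCast_mul (by norm_num), mul_comm (k : ℝ),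
      Real.rpow_mul_natCast (by norm_num)] at hk
    calc e (2 ^ k * t) / 2 ^ (k + 1) ≤ (2 ^ α) ^ k * t ^ α * Z / 2 ^ (k + 1) := by gcongr; linarith
      _ = Z * t ^ α / 2 * r ^ k := by rw [div_pow, pow_succ]; field_simp
  have hbound : ∀ n : ℕ, g t ≤ C * (1 / 2) ^ n + Z * t ^ α / 2 * ∑ k ∈ range n, r ^ k := fun n =>
    calc g t ≤ g (2 ^ n * t) / 2 ^ n + ∑ k ∈ range n, e (2 ^ k * t) / 2 ^ (k + 1) :=
          le_add_sum_of_doubling hrec n ht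
      _ ≤ C * (1 / 2) ^ n + Z * t ^ α / 2 * ∑ k ∈ range n, r ^ k := by
          rw [mul_sum, one_div_pow, ← div_eq_mul_one_div]
          gcongr with k
          · exact hC (Set.mem_range_self _)
          · exact hterm k
  have hlim : Tendsto (fun n : ℕ => C * (1 / 2) ^ n + Z * t ^ α / 2 * ∑ k ∈ range n, r ^ k) atTop
      (𝓝 (C * 0 + Z * t ^ α / 2 * (1 - r)⁻¹)) :=
    ((tendsto_pow_atTop_nhds_zero_of_lt_one (by norm_num) (by norm_num)).const_mul C).add
      ((hasSum_geometric_of_lt_one hr0 hr1).tendsto_sum_nat.const_mul _)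
  refine (ge_of_tendsto' hlim hbound).trans_eq ?_
  have : (2 : ℝ) - 2 ^ α ≠ 0 := by linarith
  rw [hr]
  field_simp
  ring

theorem norm_sub_le_two_mul_of_norm_le {X G : Type*} [SeminormedAddGroup G] {f : X → G} {M : ℝ}
    (hf : ∀ x, ‖f x‖ ≤ M) (x y : X) : ‖f x - f y‖ ≤ 2 * M := by
  linarith [norm_sub_le (f x) (f y), hf x, hf y]

section FirstModulus

variable {E F : Type*} [NormedAddCommGroup E] [NormedAddCommGroup F] {f : E → F} {M : ℝ}

theorem omegaMod_nonneg (f : E → F) (t : ℝ) : 0 ≤ omegaMod f t :=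
  Real.sSup_nonneg (by rintro _ ⟨x, h, -, rfl⟩; exact norm_nonneg _)

theorem norm_sub_le_omegaMod (hf : ∀ x, ‖f x‖ ≤ M) {x h : E} {t : ℝ} (hh : ‖h‖ ≤ t) :
    ‖f (x + h) - f x‖ ≤ omegaMod f t :=
  le_csSup ⟨2 * M, by rintro _ ⟨y, k, -, rfl⟩; exact norm_sub_le_two_mul_of_norm_le hf _ _⟩
    ⟨x, h, hh, rfl⟩

theorem bddAbove_range_omegaMod (hf : ∀ x, ‖f x‖ ≤ M) : BddAbove (range (omegaMod f)) := by
  refine ⟨max (2 * M) 0, ?_⟩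
  rintro _ ⟨t, rfl⟩
  refine Real.sSup_le ?_ (le_max_right _ _)
  rintro _ ⟨x, h, -, rfl⟩
  exact (norm_sub_le_two_mul_of_norm_le hf _ _).trans (le_max_left _ _)

end FirstModulus

section SecondModulus

variable {E F : Type*} [NormedAddCommGroup E] [NormedSpace ℝ E]
  [NormedAddCommGroup F] [NormedSpace ℝ F] {f : E → F} {M : ℝ}

theorem etaMod_nonneg (f : E → F) (t : ℝ) : 0 ≤ etaMod f t :=
  Real.sSup_nonneg (by rintro _ ⟨x, h, -, rfl⟩; exact norm_nonneg _)

theorem norm_secondDiff_le_etaMod (hf : ∀ x, ‖f x‖ ≤ M) {x h : E} {t : ℝ} (hh : ‖h‖ ≤ t) :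
    ‖f (x + 2 • h) - 2 • f (x + h) + f x‖ ≤ etaMod f t := by
  refine le_csSup ⟨2 * M + 2 * M, ?_⟩ ⟨x, h, hh, rfl⟩
  rintro _ ⟨y, k, -, rfl⟩
  have hsplit : f (y + 2 • k) - 2 • f (y + k) + f y
      = (f (y + 2 • k) - f (y + k)) - (f (y + k) - f y) := by
    rw [two_nsmul]; abel
  rw [hsplit]
  exact (norm_sub_le _ _).trans (add_le_add (norm_sub_le_two_mul_of_norm_le hf _ _)
    (norm_sub_le_two_mul_of_norm_le hf _ _))

theorem omegaMod_le_half (hf : ∀ x, ‖f x‖ ≤ M) (t : ℝ) :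
    omegaMod f t ≤ (omegaMod f (2 * t) + etaMod f t) / 2 := by
  have hnonneg := add_nonneg (omegaMod_nonneg f (2 * t)) (etaMod_nonneg f t)
  refine Real.sSup_le ?_ (by positivity)
  rintro _ ⟨x, h, hh, rfl⟩
  have hsplit : (2 : ℝ) • (f (x + h) - f x)
      = (f (x + 2 • h) - f x) - (f (x + 2 • h) - 2 • f (x + h) + f x) := by
    module
  have h2h : ‖2 • h‖ ≤ 2 * t := norm_nsmul_le.trans (by push_cast; linarith)
  calc ‖f (x + h) - f x‖
      = ‖(f (x + 2 • h) - f x) - (f (x + 2 • h) - 2 • f (x + h) + f x)‖ / 2 := by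
        rw [← hsplit, norm_smul]; norm_num
    _ ≤ (‖f (x + 2 • h) - f x‖ + ‖f (x + 2 • h) - 2 • f (x + h) + f x‖) / 2 := by
        gcongr; exact norm_sub_le _ _
    _ ≤ (omegaMod f (2 * t) + etaMod f t) / 2 := by
        gcongr
        · exact norm_sub_le_omegaMod hf h2h
        · exact norm_secondDiff_le_etaMod hf hh

end SecondModulus

/-- If f is bounded and its second modulus satisfies η(f;t) ≤ Z t^α with α ∈ (0,1),
then the first modulus satisfies ω(f;t) ≤ (1/(1−2^{α−1})) Z t^α, i.e.
sup_t ω(f;t)/t^α ≤ (1/(1−2^{α−1})) sup_t η(f;t)/t^α. -/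
theorem stmt2 {E F : Type*} [NormedAddCommGroup E] [NormedSpace ℝ E]
    [NormedAddCommGroup F] [NormedSpace ℝ F]
    (f : E → F) (M : ℝ) (hf : ∀ x, ‖f x‖ ≤ M)
    (α : ℝ) (hα : α ∈ Set.Ioo (0 : ℝ) 1)
    (Z : ℝ) (hZ : ∀ t > (0 : ℝ), etaMod f t ≤ Z * t ^ α) :
    ∀ t > (0 : ℝ), omegaMod f t ≤ (1 / (1 - 2 ^ (α - 1))) * Z * t ^ α := by
  intro t ht
  have hZ0 : 0 ≤ Z := by simpa using (etaMod_nonneg f 1).trans (hZ 1 one_pos)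
  have hr : 0 < 1 - (2 : ℝ) ^ (α - 1) :=
    sub_pos.2 (Real.rpow_lt_one_of_one_lt_of_neg one_lt_two (by linarith [hα.2]))
  have h2α : (2 : ℝ) - 2 ^ α = 2 * (1 - 2 ^ (α - 1)) := by
    rw [Real.rpow_sub two_pos, Real.rpow_one]; ring
  calc omegaMod f t ≤ Z * t ^ α / (2 - 2 ^ α) :=
        le_mul_rpow_div_of_doubling hα.2 (bddAbove_range_omegaMod hf)
          (fun s _ => omegaMod_le_half hf s) hZ ht
    _ = Z * t ^ α / (1 - 2 ^ (α - 1)) / 2 := by rw [h2α, div_mul_eq_div_div_swap]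
    _ ≤ Z * t ^ α / (1 - 2 ^ (α - 1)) := half_le_self (by positivity)
    _ = 1 / (1 - 2 ^ (α - 1)) * Z * t ^ α := by ring
end
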